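/- For a linearly ordered field F, the Cut Axiom (CA) holds in F if and only if the Lebesgue Integral Property (LIP) holds in F. -/

import Mathlib

/-!
Under the cut axiom every nonempty bounded-above set has a supremum, so `F` is a conditionally
complete ordered field and hence isomorphic to `ℝ` as an ordered field. Every notion entering the
Lebesgue integral property is expressed through the ordered-field structure, so the property
transfers from `ℝ`, where it is the dominated convergence theorem: a decreasing sequence of
nonnegative step functions is dominated by its first term, and step-function integrals are
Lebesgue integrals.

Conversely, if `(s n)` is antitone and bounded below by `l`, the indicators of `(l - 1, s n)` form
a decreasing sequence of step functions converging everywhere to the indicator of their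
intersection, so the Lebesgue integral property makes their integrals `s n - (l - 1)` converge.
Such a monotone convergence property forces `F` to be Archimedean (if `x` bounds every natural
number, `x - n` would converge), and then bisecting a cut produces a convergent sequence whose
limit is a cut point.
-/

namespace Littlewood

variable {F : Type*} [Field F] [LinearOrder F] [IsStrictOrderedRing F]

/-- A sequence `s` in `F` converges to `L`. -/
def SeqConv (s : ℕ → F) (L : F) : Prop :=
  ∀ ε : F, 0 < ε → ∃ N : ℕ, ∀ n, N ≤ n → s n - L ∈ Set.Ioo (-ε) ε

/-- `φ` is a step function on `[a,b]`: there is a partition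
`a = x 0 < x 1 < ⋯ < x n = b` such that `φ` is constant on each open subinterval. -/
def IsStepOn (a b : F) (φ : F → F) : Prop :=
  ∃ (n : ℕ) (x : ℕ → F), x 0 = a ∧ x n = b ∧ (∀ i < n, x i < x (i + 1)) ∧
    ∀ i < n, ∃ M : F, ∀ t ∈ Set.Ioo (x i) (x (i + 1)), φ t = M

/-- `I` is the integral of the step function `φ` over `[a,b]`, computed from
an admissible partition `a = x 0 < ⋯ < x n = b` with constant values `M i`. -/
def HasStepIntegral (a b : F) (φ : F → F) (I : F) : Prop :=
  ∃ (n : ℕ) (x : ℕ → F) (M : ℕ → F), x 0 = a ∧ x n = b ∧ (∀ i < n, x i < x (i + 1)) ∧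
    (∀ i < n, ∀ t ∈ Set.Ioo (x i) (x (i + 1)), φ t = M i) ∧
    I = ∑ i ∈ Finset.range n, M i * (x (i + 1) - x i)

/-- `S ⊆ [a,b]` has measure zero: for every `ε > 0` there is a countable family of
open intervals `(c n, d n) ⊆ [a,b]` covering `S` whose partial sums of lengths
converge to a sum less than `ε`. -/
def NullSet (a b : F) (S : Set F) : Prop :=
  ∀ ε : F, 0 < ε → ∃ c d : ℕ → F,
    (∀ n, c n ≤ d n ∧ Set.Ioo (c n) (d n) ⊆ Set.Icc a b) ∧
    S ⊆ (⋃ n, Set.Ioo (c n) (d n)) ∧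
    ∃ s : F, s < ε ∧ SeqConv (fun N => ∑ k ∈ Finset.range N, (d k - c k)) s

/-- `Q` holds almost everywhere in `[a,b]`. -/
def AEOn (a b : F) (Q : F → Prop) : Prop :=
  NullSet a b {x ∈ Set.Icc a b | ¬ Q x}

/-- `φ` is a monotonically decreasing sequence of step functions `[a,b] → P ∪ {0}`
converging to `f` almost everywhere in `[a,b]`. -/
def ApproxSeq (a b : F) (φ : ℕ → F → F) (f : F → F) : Prop :=
  (∀ n, IsStepOn a b (φ n)) ∧
  (∀ n, ∀ x ∈ Set.Icc a b, 0 ≤ φ n x) ∧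
  (∀ n, ∀ x ∈ Set.Icc a b, φ (n + 1) x ≤ φ n x) ∧
  AEOn a b fun x => SeqConv (fun n => φ n x) (f x)

/-- A nonnegative-valued function on `[a,b]` is Lebesgue measurable. -/
def LebMeasurableNN (a b : F) (f : F → F) : Prop :=
  ∃ φ : ℕ → F → F, ApproxSeq a b φ f

/-- A nonnegative-valued function on `[a,b]` has Lebesgue integral `I`:
it is Lebesgue measurable and for every monotonically decreasing sequence of
nonnegative step functions converging to `f` a.e., the sequence of their
(step) integrals converges to `I`. -/
def HasLebIntegralNN (a b : F) (f : F → F) (I : F) : Prop :=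
  LebMeasurableNN a b f ∧
    ∀ φ : ℕ → F → F, ApproxSeq a b φ f →
      ∀ J : ℕ → F, (∀ n, HasStepIntegral a b (φ n) (J n)) → SeqConv J I

/-- A function `[a,b] → F` is Lebesgue measurable (via its nonnegative parts). -/
def LebMeasurable (a b : F) (f : F → F) : Prop :=
  LebMeasurableNN a b (fun x => max (f x) 0) ∧ LebMeasurableNN a b fun x => max (-f x) 0

/-- A function `[a,b] → F` has a Lebesgue integral (via its nonnegative parts). -/
def HasLebIntegral (a b : F) (f : F → F) : Prop :=
  (∃ I : F, HasLebIntegralNN a b (fun x => max (f x) 0) I) ∧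
  ∃ I : F, HasLebIntegralNN a b (fun x => max (-f x) 0) I

/-- The characteristic function of `E`. -/
noncomputable def chi (E : Set F) : F → F := E.indicator fun _ => 1

/-- `E ⊆ [a,b]` is a measurable set: its characteristic function is Lebesgue measurable. -/
def MeasSet (a b : F) (E : Set F) : Prop := LebMeasurableNN a b (chi E)

/-- `E` has Lebesgue measure: `E` has measure zero or `χ_E` has a Lebesgue integral. -/
def HasLebMeasure (a b : F) (E : Set F) : Prop :=
  NullSet a b E ∨ ∃ I : F, HasLebIntegralNN a b (chi E) I

/-- `S` is an interval with endpoints `c ≤ d` (any of the four kinds). -/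
def IsIntervalWith (S : Set F) (c d : F) : Prop :=
  S = Set.Icc c d ∨ S = Set.Ico c d ∨ S = Set.Ioc c d ∨ S = Set.Ioo c d

/-- `S` is an interval. -/
def IsInterval (S : Set F) : Prop := ∃ c d : F, IsIntervalWith S c d

/-- `f` is continuous on `D`. -/
def ContOn (D : Set F) (f : F → F) : Prop :=
  ∀ c ∈ D, ∀ ε : F, 0 < ε → ∃ δ : F, 0 < δ ∧
    ∀ x ∈ D ∩ Set.Ioo (c - δ) (c + δ), f x - f c ∈ Set.Ioo (-ε) ε

/-- The functions `g n` converge uniformly to `f` on `D`. -/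
def UnifConvOn (D : Set F) (g : ℕ → F → F) (f : F → F) : Prop :=
  ∀ ε : F, 0 < ε → ∃ N : ℕ, ∀ n, N ≤ n → ∀ x ∈ D, f x - g n x ∈ Set.Ioo (-ε) ε

/-- `A` is a cut of `F`. -/
def IsCut (A : Set F) : Prop :=
  A.Nonempty ∧ A ≠ Set.univ ∧ ∀ x ∈ A, ∀ y ∉ A, x < y

/-- `c` is a cut point of `A`. -/
def IsCutPoint (A : Set F) (c : F) : Prop :=
  ∀ x ∈ A, ∀ y ∉ A, x ≤ c ∧ c ≤ y

variable (F) in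
/-- The Cut Axiom: every cut of `F` has a cut point. -/
def CutAxiom : Prop := ∀ A : Set F, IsCut A → ∃ c : F, IsCutPoint A c

variable (F) in
/-- Lebesgue Integral Property. -/
def LIP : Prop :=
  ∀ a b : F, a ≤ b → ∀ f : F → F, LebMeasurable a b f → HasLebIntegral a b f

variable (F) in
/-- Lebesgue Measure Property. -/
def LMP : Prop :=
  ∀ a b : F, a ≤ b → ∀ E ⊆ Set.Icc a b, MeasSet a b E → HasLebMeasure a b E

variable (F) in
/-- Littlewood's First Principle. -/
def LP1 : Prop :=
  ∀ a b : F, a ≤ b → ∀ E ⊆ Set.Icc a b, MeasSet a b E → ∀ ε : F, 0 < ε →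
    ∃ (m : ℕ) (I : ℕ → Set F), (∀ i < m, IsInterval (I i) ∧ I i ⊆ Set.Icc a b) ∧
      ∃ J : F, HasLebIntegralNN a b
        (chi ((E \ ⋃ i < m, I i) ∪ ((⋃ i < m, I i) \ E))) J ∧ J < ε

variable (F) in
/-- Littlewood's Second Principle. -/
def LP2 : Prop :=
  ∀ a b : F, a ≤ b → ∀ f : F → F, LebMeasurable a b f → ∀ ε : F, 0 < ε →
    ∃ E ⊆ Set.Icc a b, MeasSet a b E ∧ ContOn (Set.Icc a b \ E) f ∧
      ∃ J : F, HasLebIntegralNN a b (chi E) J ∧ J < ε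

variable (F) in
/-- Littlewood's Third Principle. -/
def LP3 : Prop :=
  ∀ a b : F, a ≤ b → ∀ φ : ℕ → F → F, (∀ n, LebMeasurable a b (φ n)) →
    ∀ f : F → F, AEOn a b (fun x => SeqConv (fun n => φ n x) (f x)) →
    ∀ ε : F, 0 < ε →
      ∃ E ⊆ Set.Icc a b, MeasSet a b E ∧ UnifConvOn (Set.Icc a b \ E) φ f ∧
        ∃ J : F, HasLebIntegralNN a b (chi E) J ∧ J < ε

end Littlewood

open Set

section OrderRingIso

variable {F G : Type*} [Field F] [LinearOrder F] [Field G] [LinearOrder G] (e : F ≃+*o G)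

lemma OrderRingIso.symm_mem_Ioo_iff {y : G} {u v : F} :
    e.symm y ∈ Ioo u v ↔ y ∈ Ioo (e u) (e v) := by
  conv_rhs => rw [← e.apply_symm_apply y]
  simp only [mem_Ioo, map_lt_map_iff]

lemma OrderRingIso.symm_mem_Icc_iff {y : G} {u v : F} :
    e.symm y ∈ Icc u v ↔ y ∈ Icc (e u) (e v) := by
  conv_rhs => rw [← e.apply_symm_apply y]
  simp only [mem_Icc, map_le_map_iff]

lemma OrderRingIso.map_max_zero (x : F) : e (max x 0) = max (e x) 0 := by
  rw [(OrderHomClass.mono e).map_max, map_zero]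

end OrderRingIso

open Classical in
noncomputable abbrev conditionallyCompleteLinearOrderOfExistsIsLUB (α : Type*) [LinearOrder α]
    [Nonempty α] (h : ∀ s : Set α, s.Nonempty → BddAbove s → ∃ c, IsLUB s c) :
    ConditionallyCompleteLinearOrder α where
  __ := ‹LinearOrder α›
  __ := LinearOrder.toLattice
  sSup s := if hs : s.Nonempty ∧ BddAbove s then
      (h s hs.1 hs.2).choose else Classical.arbitrary α
  sInf s := if hs : s.Nonempty ∧ BddBelow s then
      (h _ hs.2 hs.1.bddAbove_lowerBounds).choose else Classical.arbitrary α
  isLUB_csSup s hne hbdd := by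
    rw [dif_pos ⟨hne, hbdd⟩]
    exact (h s hne hbdd).choose_spec
  isGLB_csInf s hne hbdd := by
    rw [dif_pos ⟨hne, hbdd⟩]
    exact isLUB_lowerBounds.1 (h _ hbdd hne.bddAbove_lowerBounds).choose_spec
  csSup_of_not_bddAbove s hs := by simp [hs]
  csInf_of_not_bddBelow s hs := by simp [hs]

namespace Littlewood

variable {F : Type*} [Field F] [LinearOrder F]

lemma isStepOn_const {α : Type*} [LinearOrder α] {a b : α} (hab : a ≤ b) (M : α) :
    IsStepOn a b fun _ => M := by
  rcases hab.eq_or_lt with rfl | hab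
  · exact ⟨0, fun _ => a, rfl, rfl, by simp, by simp⟩
  · exact ⟨1, fun i => if i = 0 then a else b, rfl, rfl, by simpa using hab,
      fun _ _ => ⟨M, fun _ _ => rfl⟩⟩

lemma HasStepIntegral.isStepOn {a b I : F} {φ : F → F} (h : HasStepIntegral a b φ I) :
    IsStepOn a b φ :=
  let ⟨n, x, M, h0, hn, hx, hM, _⟩ := h
  ⟨n, x, h0, hn, hx, fun i hi => ⟨M i, hM i hi⟩⟩

lemma hasStepIntegral_chi_Ioo {a c b : F} (hac : a < c) (hcb : c < b) :
    HasStepIntegral a b (chi (Ioo a c)) (c - a) := by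
  refine ⟨2, fun i => if i = 0 then a else if i = 1 then c else b,
    fun i => if i = 0 then 1 else 0, rfl, rfl, ?_, ?_, by simp⟩
  · intro i hi
    interval_cases i <;> simpa
  · intro i hi t ht
    interval_cases i
    · exact indicator_of_mem ht _
    · exact indicator_of_notMem (fun h => h.2.not_gt ht.1) _

lemma NullSet.mono {a b : F} {S T : Set F} (h : NullSet a b T) (hST : S ⊆ T) : NullSet a b S :=
  fun ε hε =>
  let ⟨c, d, hcd, hcover, hsum⟩ := h ε hε
  ⟨c, d, hcd, hST.trans hcover, hsum⟩

section

variable [IsStrictOrderedRing F]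

lemma seqConv_of_eventually_eq {s : ℕ → F} {L : F} {N : ℕ} (h : ∀ n, N ≤ n → s n = L) :
    SeqConv s L := fun ε hε =>
  ⟨N, fun n hn => by rw [h n hn, sub_self]; exact ⟨neg_lt_zero.2 hε, hε⟩⟩

lemma ge_of_seqConv {s : ℕ → F} {L x : F} (hs : SeqConv s L) (h : ∀ n, x ≤ s n) :
    x ≤ L := by
  by_contra! hL
  obtain ⟨N, hN⟩ := hs (x - L) (sub_pos.2 hL)
  linarith [(hN N le_rfl).2, h N]

lemma Antitone.le_of_seqConv {s : ℕ → F} {L : F} (hs : Antitone s) (hL : SeqConv s L)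
    (m : ℕ) :
    L ≤ s m := by
  by_contra! hm
  obtain ⟨N, hN⟩ := hL (L - s m) (sub_pos.2 hm)
  linarith [(hN (max N m) (le_max_left N m)).1, hs (le_max_right N m)]

lemma nullSet_empty (a b : F) : NullSet a b ∅ := fun ε hε =>
  ⟨fun _ => a, fun _ => a, fun _ => ⟨le_rfl, by simp⟩, empty_subset _, 0, hε,
    seqConv_of_eventually_eq (N := 0) fun n _ => by simp⟩

lemma aeOn_of_forall {a b : F} {Q : F → Prop} (h : ∀ x ∈ Icc a b, Q x) : AEOn a b Q := by
  have hempty : {x ∈ Icc a b | ¬ Q x} = ∅ :=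
    eq_empty_of_forall_notMem fun x hx => hx.2 (h x hx.1)
  rw [AEOn, hempty]
  exact nullSet_empty a b

lemma chi_nonneg (E : Set F) (x : F) : 0 ≤ chi E x :=
  indicator_nonneg (fun _ _ => zero_le_one) x

lemma seqConv_chi_iInter {E : ℕ → Set F} (hE : Antitone E) (x : F) :
    SeqConv (fun n => chi (E n) x) (chi (⋂ n, E n) x) := by
  by_cases hx : x ∈ ⋂ n, E n
  · exact seqConv_of_eventually_eq (N := 0) fun n _ =>
      by rw [chi, chi, indicator_of_mem hx, indicator_of_mem (mem_iInter.1 hx n)]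
  · obtain ⟨m, hm⟩ := mem_iInter.not.1 hx |> not_forall.1
    exact seqConv_of_eventually_eq (N := m) fun n hn =>
      by rw [chi, chi, indicator_of_notMem hx, indicator_of_notMem fun h => hm (hE hn h)]

lemma approxSeq_chi_iInter {a b : F} {E : ℕ → Set F} (hE : Antitone E)
    (hstep : ∀ n, IsStepOn a b (chi (E n))) :
    ApproxSeq a b (fun n => chi (E n)) (chi (⋂ n, E n)) :=
  ⟨hstep, fun _ _ _ => chi_nonneg _ _,
    fun n _ _ => indicator_le_indicator_of_subset (hE n.le_succ) (fun _ => zero_le_one) _,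
    aeOn_of_forall fun x _ => seqConv_chi_iInter hE x⟩

lemma LIP.exists_hasLebIntegralNN (h : LIP F) {a b : F} (hab : a ≤ b) {g : F → F}
    (hg : ∀ x, 0 ≤ g x) (hm : LebMeasurableNN a b g) : ∃ I, HasLebIntegralNN a b g I := by
  have hpos : (fun x => max (g x) 0) = g := funext fun x => max_eq_left (hg x)
  have hneg : (fun x => max (-g x) 0) = fun _ => 0 := funext fun x => by simpa using hg x
  have hzero : LebMeasurableNN a b fun _ => (0 : F) :=
    ⟨fun _ _ => 0, fun _ => isStepOn_const hab 0, fun _ _ _ => le_rfl, fun _ _ _ => le_rfl,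
      aeOn_of_forall fun _ _ => seqConv_of_eventually_eq (N := 0) fun _ _ => rfl⟩
  have hmeas : LebMeasurable a b g := by
    rw [LebMeasurable, hpos, hneg]
    exact ⟨hm, hzero⟩
  obtain ⟨I, hI⟩ := (h a b hab g hmeas).1
  exact ⟨I, hpos ▸ hI⟩

variable (F) in
def AntitoneConvergence : Prop :=
  ∀ s : ℕ → F, Antitone s → BddBelow (range s) → ∃ L, SeqConv s L

theorem antitoneConvergence_of_lip (h : LIP F) : AntitoneConvergence F := by
  rintro s hs ⟨l, hl⟩
  have hmem : ∀ n, s n ∈ Ioo (l - 1) (s 0 + 1) := fun n =>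
    ⟨by linarith [hl (mem_range_self n)], by linarith [hs (Nat.zero_le n)]⟩
  have hab : l - 1 ≤ s 0 + 1 := (hmem 0).1.le.trans (hmem 0).2.le
  have hE : Antitone fun n => Ioo (l - 1) (s n) := fun m n hmn => Ioo_subset_Ioo_right (hs hmn)
  have hint n := hasStepIntegral_chi_Ioo (hmem n).1 (hmem n).2
  have happrox := approxSeq_chi_iInter hE fun n => (hint n).isStepOn
  obtain ⟨I, hI⟩ := h.exists_hasLebIntegralNN hab (chi_nonneg _) ⟨_, happrox⟩
  refine ⟨I + (l - 1), fun ε hε => ?_⟩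
  obtain ⟨N, hN⟩ := hI.2 _ happrox _ hint ε hε
  exact ⟨N, fun n hn => by simpa only [sub_sub, add_comm] using hN n hn⟩

theorem archimedean_of_antitoneConvergence (h : AntitoneConvergence F) : Archimedean F := by
  refine archimedean_iff_nat_lt.2 fun x => ?_
  by_contra! hx
  obtain ⟨L, hL⟩ := h (fun n => x - n) (fun m n hmn => sub_le_sub_left (Nat.cast_le.2 hmn) x)
    ⟨0, by rintro _ ⟨n, rfl⟩; simpa using hx n⟩
  obtain ⟨N, hN⟩ := hL (1 / 2) (by norm_num)
  have h₁ := hN N le_rfl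
  have h₂ := hN (N + 1) N.le_succ
  simp only [mem_Ioo, Nat.cast_succ] at h₁ h₂
  linarith [h₁.2, h₂.1]

open Classical in
noncomputable def bisect (A : Set F) (a b : F) : ℕ → F × F
  | 0 => (a, b)
  | n + 1 =>
    let m := ((bisect A a b n).1 + (bisect A a b n).2) / 2
    if m ∈ A then (m, (bisect A a b n).2) else ((bisect A a b n).1, m)

lemma bisect_spec {A : Set F} {a b : F} (ha : a ∈ A) (hb : b ∉ A) (n : ℕ) :
    (bisect A a b n).1 ∈ A ∧ (bisect A a b n).2 ∉ A ∧
      2 ^ n * ((bisect A a b n).2 - (bisect A a b n).1) = b - a := by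
  induction n with
  | zero => simpa [bisect] using ⟨ha, hb⟩
  | succ n ih =>
    obtain ⟨h₁, h₂, h₃⟩ := ih
    simp only [bisect]
    split_ifs with hm
    · exact ⟨hm, h₂, by rw [← h₃]; ring⟩
    · exact ⟨h₁, hm, by rw [← h₃]; ring⟩

lemma bisect_snd_antitone {A : Set F} {a b : F} (ha : a ∈ A) (hb : b ∉ A)
    (hA : ∀ x ∈ A, ∀ y ∉ A, x < y) : Antitone fun n => (bisect A a b n).2 := by
  refine antitone_nat_of_succ_le fun n => ?_
  have hlt := hA _ (bisect_spec ha hb n).1 _ (bisect_spec ha hb n).2.1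
  simp only [bisect]
  split_ifs <;> linarith

theorem cutAxiom_of_antitoneConvergence (h : AntitoneConvergence F) : CutAxiom F := by
  have := archimedean_of_antitoneConvergence h
  rintro A ⟨⟨a, ha⟩, hA, hlt⟩
  obtain ⟨b, hb⟩ := (ne_univ_iff_exists_notMem A).1 hA
  have hspec := bisect_spec ha hb
  have hanti := bisect_snd_antitone ha hb hlt
  obtain ⟨L, hL⟩ := h _ hanti
    ⟨a, by rintro _ ⟨n, rfl⟩; exact (hlt a ha _ (hspec n).2.1).le⟩
  refine ⟨L, fun x hx y hy => ⟨ge_of_seqConv hL fun n => (hlt x hx _ (hspec n).2.1).le, ?_⟩⟩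
  -- if `y < L`, the bisection intervals would all have length at least `L - y`
  by_contra! hyL
  obtain ⟨n, hn⟩ := pow_unbounded_of_one_lt ((b - a) / (L - y)) one_lt_two
  rw [div_lt_iff₀ (sub_pos.2 hyL)] at hn
  have hfst := hlt _ (hspec n).1 y hy
  have hsnd := Antitone.le_of_seqConv hanti hL n
  nlinarith [(hspec n).2.2, pow_pos (two_pos (α := F)) n]

theorem exists_isLUB_of_cutAxiom (h : CutAxiom F) {S : Set F} (hne : S.Nonempty)
    (hbdd : BddAbove S) : ∃ c, IsLUB S c := by
  obtain ⟨s, hs⟩ := hne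
  obtain ⟨u, hu⟩ := hbdd
  have hcut : IsCut (upperBounds S)ᶜ := by
    refine ⟨⟨s - 1, fun h => by linarith [h hs]⟩, fun h => (h ▸ mem_univ u) hu, ?_⟩
    intro x hx y hy
    obtain ⟨t, ht, hxt⟩ := not_forall₂.1 hx
    exact (not_le.1 hxt).trans_le (not_not.1 hy ht)
  obtain ⟨c, hc⟩ := h _ hcut
  refine ⟨c, fun t ht => ?_, fun y hy => (hc _ hcut.1.some_mem y (not_not.2 hy)).2⟩
  by_contra! hct
  have hmid : (c + t) / 2 ∉ upperBounds S := fun h => by linarith [h ht]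
  linarith [(hc _ hmid u (not_not.2 hu)).1]

end

section Real

open MeasureTheory Filter

lemma seqConv_iff_tendsto {s : ℕ → ℝ} {L : ℝ} :
    SeqConv s L ↔ Tendsto s atTop (nhds L) := by
  simp only [Metric.tendsto_atTop, Real.dist_eq, abs_sub_lt_iff, SeqConv, mem_Ioo]
  refine forall₂_congr fun ε _ => exists_congr fun N => forall₂_congr fun n _ => ?_
  constructor <;> rintro ⟨h₁, h₂⟩ <;> constructor <;> linarith

lemma NullSet.volume_eq_zero {a b : ℝ} {S : Set ℝ} (h : NullSet a b S) : volume S = 0 := by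
  refine le_antisymm (ENNReal.le_of_forall_pos_le_add fun ε hε _ => ?_) zero_le
  obtain ⟨c, d, hcd, hcover, s, hs, hconv⟩ := h ε (by exact_mod_cast hε)
  have hnn k : 0 ≤ d k - c k := sub_nonneg.2 (hcd k).1
  have hsum : HasSum (fun k => d k - c k) s :=
    (hasSum_iff_tendsto_nat_of_nonneg hnn s).2 (seqConv_iff_tendsto.1 hconv)
  calc volume S ≤ volume (⋃ n, Ioo (c n) (d n)) := measure_mono hcover
    _ ≤ ∑' n, volume (Ioo (c n) (d n)) := measure_iUnion_le _
    _ = ENNReal.ofReal s := by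
      simp only [Real.volume_Ioo]
      rw [← ENNReal.ofReal_tsum_of_nonneg hnn hsum.summable, hsum.tsum_eq]
    _ ≤ 0 + ε := by
      rw [zero_add, ← ENNReal.ofReal_coe_nnreal]
      exact ENNReal.ofReal_le_ofReal hs.le

lemma HasStepIntegral.integral_eq {a b J : ℝ} {φ : ℝ → ℝ} (h : HasStepIntegral a b φ J) :
    IntegrableOn φ (Ioo a b) ∧ ∫ x in Ioo a b, φ x = J := by
  obtain ⟨n, x, M, rfl, rfl, hmono, hval, rfl⟩ := h
  have hpiece : ∀ i < n, IntervalIntegrable φ volume (x i) (x (i + 1)) ∧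
      ∫ t in x i..x (i + 1), φ t = M i * (x (i + 1) - x i) := by
    intro i hi
    have hae : φ =ᵐ[volume.restrict (Ioo (x i) (x (i + 1)))] fun _ => M i :=
      (ae_restrict_iff' measurableSet_Ioo).2 (ae_of_all _ (hval i hi))
    rw [intervalIntegrable_iff_integrableOn_Ioo_of_le (hmono i hi).le,
      intervalIntegral.integral_of_le (hmono i hi).le, integral_Ioc_eq_integral_Ioo,
      integral_congr_ae hae, setIntegral_const, Real.volume_real_Ioo_of_le (hmono i hi).le,
      smul_eq_mul, mul_comm]
    exact ⟨(integrableOn_const measure_Ioo_lt_top.ne).congr hae.symm, rfl⟩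
  have hle : x 0 ≤ x n := by
    rw [← sub_nonneg, ← Finset.sum_range_sub]
    exact Finset.sum_nonneg fun i hi => (sub_pos.2 (hmono i (Finset.mem_range.1 hi))).le
  have hint := IntervalIntegrable.trans_iterate fun i hi => (hpiece i hi).1
  rw [intervalIntegrable_iff_integrableOn_Ioo_of_le hle] at hint
  rw [← integral_Ioc_eq_integral_Ioo, ← intervalIntegral.integral_of_le hle,
    ← intervalIntegral.sum_integral_adjacent_intervals fun i hi => (hpiece i hi).1]
  exact ⟨hint, Finset.sum_congr rfl fun i hi => (hpiece i (Finset.mem_range.1 hi)).2⟩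

theorem hasLebIntegralNN_real {a b : ℝ} {g : ℝ → ℝ} (hg : LebMeasurableNN a b g) :
    HasLebIntegralNN a b g (∫ x in Ioo a b, g x) := by
  refine ⟨hg, fun φ ⟨_, hnonneg, hdec, hae⟩ J hJ => ?_⟩
  have hint n := (hJ n).integral_eq.1
  have hlim : ∀ᵐ x ∂volume.restrict (Ioo a b),
      Tendsto (fun n => φ n x) atTop (nhds (g x)) := by
    refine (ae_restrict_iff' measurableSet_Ioo).2 (measure_mono_null ?_ hae.volume_eq_zero)
    intro x hx
    obtain ⟨hx, hconv⟩ := Classical.not_imp.1 hx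
    exact ⟨Ioo_subset_Icc_self hx, fun h => hconv (seqConv_iff_tendsto.1 h)⟩
  have hbound n : ∀ᵐ x ∂volume.restrict (Ioo a b), ‖φ n x‖ ≤ φ 0 x := by
    refine (ae_restrict_iff' measurableSet_Ioo).2 (ae_of_all _ fun x hx => ?_)
    have hx := Ioo_subset_Icc_self hx
    rw [Real.norm_of_nonneg (hnonneg n x hx)]
    exact antitone_nat_of_succ_le (f := fun n => φ n x) (fun n => hdec n x hx) n.zero_le
  rw [seqConv_iff_tendsto, funext fun n => ((hJ n).integral_eq.2).symm]
  exact tendsto_integral_of_dominated_convergence _ (fun n => (hint n).aestronglyMeasurable)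
    (hint 0) hbound hlim

theorem lip_real : LIP ℝ := fun _ _ _ _ hf =>
  ⟨⟨_, hasLebIntegralNN_real hf.1⟩, ⟨_, hasLebIntegralNN_real hf.2⟩⟩

end Real

section Transport

variable {G : Type*} [Field G] [LinearOrder G] (e : F ≃+*o G)

lemma SeqConv.map {s : ℕ → F} {L : F} (h : SeqConv s L) : SeqConv (fun n => e (s n)) (e L) := by
  intro ε hε
  obtain ⟨N, hN⟩ := h (e.symm ε) (e.lt_symm_apply.2 (by rwa [map_zero]))
  refine ⟨N, fun n hn => ?_⟩
  have := hN n hn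
  rwa [← e.symm_apply_apply (s n - L), e.symm_mem_Ioo_iff, map_neg, e.apply_symm_apply,
    map_sub] at this

lemma IsStepOn.map {a b : F} {φ : F → F} (h : IsStepOn a b φ) :
    IsStepOn (e a) (e b) fun y => e (φ (e.symm y)) := by
  obtain ⟨n, x, rfl, rfl, hx, hφ⟩ := h
  refine ⟨n, fun i => e (x i), rfl, rfl, fun i hi => map_lt_map_iff e |>.2 (hx i hi),
    fun i hi => ?_⟩
  obtain ⟨M, hM⟩ := hφ i hi
  exact ⟨e M, fun t ht => congrArg e (hM _ (e.symm_mem_Ioo_iff.2 ht))⟩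

lemma HasStepIntegral.map {a b J : F} {φ : F → F} (h : HasStepIntegral a b φ J) :
    HasStepIntegral (e a) (e b) (fun y => e (φ (e.symm y))) (e J) := by
  obtain ⟨n, x, M, rfl, rfl, hx, hφ, rfl⟩ := h
  refine ⟨n, fun i => e (x i), fun i => e (M i), rfl, rfl,
    fun i hi => map_lt_map_iff e |>.2 (hx i hi),
    fun i hi t ht => congrArg e (hφ i hi _ (e.symm_mem_Ioo_iff.2 ht)), by simp [map_sum]⟩

lemma NullSet.map {a b : F} {S : Set F} (h : NullSet a b S) :
    NullSet (e a) (e b) (e.symm ⁻¹' S) := by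
  intro ε hε
  obtain ⟨c, d, hcd, hcover, s, hs, hconv⟩ :=
    h (e.symm ε) (e.lt_symm_apply.2 (by rwa [map_zero]))
  refine ⟨fun k => e (c k), fun k => e (d k), fun k => ⟨map_le_map_iff e |>.2 (hcd k).1, ?_⟩,
    fun y hy => ?_, e s, e.lt_symm_apply.1 hs, by simpa [map_sum] using hconv.map e⟩
  · exact fun y hy => e.symm_mem_Icc_iff.1 ((hcd k).2 (e.symm_mem_Ioo_iff.2 hy))
  · obtain ⟨k, hk⟩ := mem_iUnion.1 (hcover hy)
    exact mem_iUnion.2 ⟨k, e.symm_mem_Ioo_iff.1 hk⟩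

lemma AEOn.map {a b : F} {Q : F → Prop} {Q' : G → Prop} (h : AEOn a b Q)
    (hQ : ∀ x ∈ Icc a b, Q x → Q' (e x)) : AEOn (e a) (e b) Q' := by
  refine (NullSet.map e h).mono fun y ⟨hy, hQ'⟩ => ?_
  have hx := e.symm_mem_Icc_iff.2 hy
  exact ⟨hx, fun hQy => hQ' (by simpa using hQ _ hx hQy)⟩

lemma ApproxSeq.map {a b : F} {φ : ℕ → F → F} {f : F → F} (h : ApproxSeq a b φ f) :
    ApproxSeq (e a) (e b) (fun n y => e (φ n (e.symm y))) (fun y => e (f (e.symm y))) := by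
  obtain ⟨hstep, hnonneg, hdec, hconv⟩ := h
  refine ⟨fun n => (hstep n).map e, fun n y hy => ?_, fun n y hy => ?_, hconv.map e ?_⟩
  · simpa using map_le_map_iff e |>.2 (hnonneg n _ (e.symm_mem_Icc_iff.2 hy))
  · exact map_le_map_iff e |>.2 (hdec n _ (e.symm_mem_Icc_iff.2 hy))
  · intro x _ hx
    simpa using hx.map e

lemma LebMeasurableNN.map {a b : F} {g : F → F} (h : LebMeasurableNN a b g) :
    LebMeasurableNN (e a) (e b) fun y => e (g (e.symm y)) :=
  let ⟨_, hφ⟩ := h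
  ⟨_, hφ.map e⟩

lemma hasLebIntegralNN_of_map {a b : F} {g : F → F} (hg : LebMeasurableNN a b g) {I : G}
    (h : HasLebIntegralNN (e a) (e b) (fun y => e (g (e.symm y))) I) :
    HasLebIntegralNN a b g (e.symm I) :=
  ⟨hg, fun _ hφ _ hJ => by simpa using (h.2 _ (hφ.map e) _ fun n => (hJ n).map e).map e.symm⟩

end Transport

theorem lip_of_orderRingIso {G : Type*} [Field G] [LinearOrder G]
    (e : F ≃+*o G) (h : LIP G) : LIP F := by
  intro a b hab f ⟨hf₁, hf₂⟩
  have hpos : (fun y => e (max (f (e.symm y)) 0)) = fun y => max (e (f (e.symm y))) 0 :=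
    funext fun y => e.map_max_zero _
  have hneg : (fun y => e (max (-f (e.symm y)) 0)) = fun y => max (-e (f (e.symm y))) 0 :=
    funext fun y => by rw [e.map_max_zero, map_neg]
  have hf := h (e a) (e b) (map_le_map_iff e |>.2 hab) (fun y => e (f (e.symm y)))
    ⟨hpos ▸ hf₁.map e, hneg ▸ hf₂.map e⟩
  rw [HasLebIntegral, ← hpos, ← hneg] at hf
  obtain ⟨⟨I₁, hI₁⟩, ⟨I₂, hI₂⟩⟩ := hf
  exact ⟨⟨_, hasLebIntegralNN_of_map e hf₁ hI₁⟩,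
    ⟨_, hasLebIntegralNN_of_map e hf₂ hI₂⟩⟩

theorem cutAxiom_iff_lebesgueIntegralProperty (F : Type*) [Field F] [LinearOrder F] [IsStrictOrderedRing F] :
    CutAxiom F ↔ LIP F := by
  refine ⟨fun h => ?_, fun h => cutAxiom_of_antitoneConvergence (antitoneConvergence_of_lip h)⟩
  -- extends the given `LinearOrder F`, so `IsStrictOrderedRing F` still applies
  let := conditionallyCompleteLinearOrderOfExistsIsLUB F fun _ => exists_isLUB_of_cutAxiom h
  exact lip_of_orderRingIso
    (ConditionallyCompleteLinearOrderedField.inducedOrderRingIso F ℝ) lip_real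

end Littlewood
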